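/- arXiv:1303.4046 — 4 statements merged into one kernel-verified Lean document; each statement's English description precedes it below -/
import Mathlib

section
/- Let K = ℂ((ℏ)) be the field of formal Laurent series over ℂ and let A be a commutative ring equipped with a K-algebra structure such that A has dimension 2 as a K-vector space. Then at least one of the following holds as K-algebra isomorphisms: A ≃ K[X]/(X²), A ≃ K × K, or A ≃ K[X]/(X² − ℏ). -/
noncomputable section

/-- `K = ℂ((ℏ))`, the field of formal Laurent series over `ℂ`. -/
abbrev K : Type := LaurentSeries ℂ

/-- The series variable `ℏ` of `K = ℂ((ℏ))`. -/
def hbar : K := HahnSeries.single (1 : ℤ) (1 : ℂ)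

section Aux
open Finset


private noncomputable def sqc (u : ℕ → ℂ) (s : ℂ) : ℕ → ℂ
  | 0 => s
  | n + 1 => (u (n+1) - ∑ i ∈ (Finset.Ioo 0 (n+1)).attach,
      sqc u s i.1 * sqc u s (n+1-i.1)) / (2*s)
  decreasing_by
  · have := Finset.mem_Ioo.mp i.2; omega
  · have := Finset.mem_Ioo.mp i.2; omega

private lemma sqc_succ (u : ℕ → ℂ) (s : ℂ) (hs : s ≠ 0) (n : ℕ) :
    (2*s) * sqc u s (n+1) = u (n+1) - ∑ i ∈ Finset.Ioo 0 (n+1), sqc u s i * sqc u s (n+1-i) := by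
  rw [sqc, ← Finset.sum_attach (Finset.Ioo 0 (n+1)) (fun i => sqc u s i * sqc u s (n+1-i))]
  field_simp

private lemma sqc_zero (u : ℕ → ℂ) (s : ℂ) : sqc u s 0 = s := by rw [sqc]

private lemma exists_sqrt_powerSeries (p : PowerSeries ℂ) (hp : PowerSeries.constantCoeff p ≠ 0) :
    ∃ q : PowerSeries ℂ, q ^ 2 = p := by
  obtain ⟨s, hs⟩ := IsAlgClosed.exists_pow_nat_eq (k := ℂ) (PowerSeries.constantCoeff p)
    (n := 2) (by norm_num)
  have hs0 : s ≠ 0 := by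
    intro h; rw [h] at hs; simp at hs; exact hp hs.symm
  set u : ℕ → ℂ := fun n => PowerSeries.coeff n p with hu
  refine ⟨PowerSeries.mk (sqc u s), ?_⟩
  ext n
  rw [pow_two, PowerSeries.coeff_mul, Finset.Nat.sum_antidiagonal_eq_sum_range_succ_mk]
  simp only [PowerSeries.coeff_mk]
  match n with
  | 0 =>
    rw [Finset.sum_range_one, sqc_zero, ← pow_two, hs]
    simp [hu]
  | (m+1) =>
    rw [Finset.sum_range_succ, Finset.sum_range_succ']
    have hIoo : ∑ i ∈ Finset.range m, sqc u s (i+1) * sqc u s (m+1-(i+1)) =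
        ∑ i ∈ Finset.Ioo 0 (m+1), sqc u s i * sqc u s (m+1-i) := by
      rw [show Finset.Ioo 0 (m+1) = Finset.Ico 1 (m+1) by rfl, Finset.sum_Ico_eq_sum_range]
      simp [add_comm]
    rw [hIoo, Nat.sub_self, sqc_zero]
    simp only [Nat.sub_zero]
    have h := sqc_succ u s hs0 m
    have : PowerSeries.coeff (m+1) p = u (m+1) := rfl
    rw [this]
    linear_combination h

private lemma sq_or_hbar_mul_sq (d : K) (hd : d ≠ 0) :
    (∃ e : K, d = e ^ 2) ∨ (∃ e : K, d = hbar * e ^ 2) := by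
  set p := d.powerSeriesPart with hp
  have hpc : PowerSeries.constantCoeff p ≠ 0 := by
    have := LaurentSeries.powerSeriesPart_coeff d 0
    rw [← PowerSeries.coeff_zero_eq_constantCoeff_apply]
    rw [this]
    simpa using (HahnSeries.coeff_order_eq_zero.not.mpr hd)
  obtain ⟨q, hq⟩ := exists_sqrt_powerSeries p hpc
  have hd2 : d = HahnSeries.single d.order 1 * (HahnSeries.ofPowerSeries ℤ ℂ q) ^ 2 := by
    rw [← map_pow, hq, hp]
    exact (LaurentSeries.single_order_mul_powerSeriesPart d).symm
  rcases Int.even_or_odd d.order with ⟨m, hm⟩ | ⟨m, hm⟩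
  · left
    refine ⟨HahnSeries.single m 1 * HahnSeries.ofPowerSeries ℤ ℂ q, ?_⟩
    rw [hd2, mul_pow]
    congr 1
    rw [pow_two, HahnSeries.single_mul_single, ← hm, mul_one]
  · right
    refine ⟨HahnSeries.single m 1 * HahnSeries.ofPowerSeries ℤ ℂ q, ?_⟩
    rw [hd2, mul_pow, hbar, ← mul_assoc]
    congr 1
    rw [pow_two, HahnSeries.single_mul_single, HahnSeries.single_mul_single,
      show (1:ℤ) + (m + m) = d.order from by omega]
    norm_num

open Polynomial

variable {F : Type*} [Field F]
private lemma span_pair_smul_ne_zero {B : Type*} [CommRing B] [Algebra F B] {y : B} {c : F}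
    (hc : c ≠ 0) (h : Submodule.span F {1, y} = ⊤) :
    Submodule.span F {1, c • y} = ⊤ := by
  rw [eq_top_iff, ← h, Submodule.span_le]
  rintro w (rfl | rfl)
  · exact Submodule.subset_span (Set.mem_insert _ _)
  · exact Submodule.mem_span_pair.mpr ⟨0, c⁻¹, by simp [smul_smul, inv_mul_cancel₀ hc]⟩

private lemma equiv_adjoinRoot {B : Type*} [CommRing B] [Algebra F B]
    (hdim : Module.finrank F B = 2) (d : F) (z : B)
    (hz : z ^ 2 = algebraMap F B d)
    (hspan : Submodule.span F {1, z} = ⊤) :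
    Nonempty (B ≃ₐ[F] AdjoinRoot (X ^ 2 - C d)) := by
  set f : Polynomial F := X ^ 2 - C d with hfdef
  have hmonic : f.Monic := monic_X_pow_sub_C d (by norm_num)
  have hf0 : f ≠ 0 := hmonic.ne_zero
  have hdeg : f.natDegree = 2 := natDegree_X_pow_sub_C
  let pb := AdjoinRoot.powerBasis hf0
  have hfin : Module.Finite F (AdjoinRoot f) := pb.finite
  have hfr : Module.finrank F (AdjoinRoot f) = 2 := by
    rw [pb.finrank]
    show f.natDegree = 2
    exact hdeg
  have hB : FiniteDimensional F B := .of_finrank_pos (by omega)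
  have haev : aeval z f = 0 := by
    rw [hfdef, map_sub, map_pow, aeval_X, aeval_C, hz, sub_self]
  let φ : AdjoinRoot f →ₐ[F] B := AdjoinRoot.liftAlgHom f (Algebra.ofId F B) z (by rw [← haev]; rfl)
  have hsurj : Function.Surjective φ := by
    rw [← AlgHom.range_eq_top]
    have h1 : Submodule.span F {1, z} ≤ Subalgebra.toSubmodule φ.range := by
      rw [Submodule.span_le]
      rintro w (rfl | rfl)
      · exact one_mem φ.range
      · exact ⟨AdjoinRoot.root f, by simp [φ] ⟩
    rw [hspan] at h1
    exact Algebra.toSubmodule_eq_top.mp (top_le_iff.mp h1)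
  have hinj : Function.Injective φ :=
    (LinearMap.injective_iff_surjective_of_finrank_eq_finrank
      (f := φ.toLinearMap) (by rw [hfr, hdim])).mpr hsurj
  exact ⟨(AlgEquiv.ofBijective φ ⟨hinj, hsurj⟩).symm⟩

private lemma equiv_adjoinRoot_zero {B : Type*} [CommRing B] [Algebra F B]
    (hdim : Module.finrank F B = 2) (z : B) (hz : z ^ 2 = algebraMap F B 0)
    (hspan : Submodule.span F {1, z} = ⊤) :
    Nonempty (B ≃ₐ[F] AdjoinRoot ((X : F[X]) ^ 2)) := by
  obtain ⟨i⟩ := equiv_adjoinRoot hdim 0 z hz hspan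
  have hp : (X ^ 2 - C (0:F) : F[X]) = X ^ 2 := by rw [map_zero, sub_zero]
  exact ⟨hp ▸ i⟩

/-- Existence of `y` with `y² ∈ F` and `{1, y}` spanning. -/
private lemma exists_sq_scalar (h2 : (2 : F) ≠ 0) {A : Type*} [CommRing A] [Algebra F A]
    (hdim : Module.finrank F A = 2) :
    ∃ (d : F) (y : A), y ^ 2 = algebraMap F A d ∧ Submodule.span F {1, y} = ⊤ := by
  have hfin : FiniteDimensional F A := .of_finrank_pos (by omega)
  have hnt : Nontrivial A := Module.nontrivial_of_finrank_pos (R := F) (by omega)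
  -- find x outside span {1}
  have hx : ∃ x : A, x ∉ Submodule.span F {(1 : A)} := by
    by_contra h
    push_neg at h
    have htop : Submodule.span F {(1 : A)} = ⊤ := Submodule.eq_top_iff'.mpr h
    have h1 := finrank_span_singleton (K := F) (one_ne_zero : (1 : A) ≠ 0)
    rw [htop, finrank_top] at h1
    omega
  obtain ⟨x, hx⟩ := hx
  have hinj : Function.Injective (algebraMap F A) := RingHom.injective _
  have hli : LinearIndependent F ![(1 : A), x] := by
    rw [LinearIndependent.pair_iff]
    intro s t hst
    rcases eq_or_ne t 0 with rfl | ht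
    · rw [zero_smul, add_zero, ← Algebra.algebraMap_eq_smul_one] at hst
      exact ⟨hinj (hst.trans (map_zero _).symm), rfl⟩
    · exfalso
      apply hx
      rw [Submodule.mem_span_singleton]
      refine ⟨-(s/t), ?_⟩
      have h1 : t • x = -(s • (1:A)) := by
        rw [eq_neg_iff_add_eq_zero, add_comm]; exact hst
      calc (-(s/t)) • (1:A) = t⁻¹ • -(s • (1:A)) := by
            rw [smul_neg, smul_smul, ← neg_smul, div_eq_inv_mul]
        _ = t⁻¹ • (t • x) := by rw [h1]
        _ = x := by rw [smul_smul, inv_mul_cancel₀ ht, one_smul]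
  have hspanx : Submodule.span F {(1 : A), x} = ⊤ := by
    have h := (basisOfLinearIndependentOfCardEqFinrank hli (by simp [hdim])).span_eq
    rw [coe_basisOfLinearIndependentOfCardEqFinrank] at h
    rwa [show Set.range ![(1:A), x] = {1, x} from by
      simp only [Matrix.range_cons, Matrix.range_empty, Set.union_empty,
        Set.union_singleton, Set.pair_comm x 1]] at h
  obtain ⟨b, c, hbc⟩ := Submodule.mem_span_pair.mp
    (hspanx ▸ Submodule.mem_top : x ^ 2 ∈ Submodule.span F {(1 : A), x})
  set y : A := x - (c / 2) • 1 with hy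
  refine ⟨b + c ^ 2 / 4, y, ?_, ?_⟩
  · have hx2 : x ^ 2 = algebraMap F A b + algebraMap F A c * x := by
      rw [← hbc, Algebra.smul_def, Algebra.smul_def, mul_one]
    have e1 : (algebraMap F A) (c / 2) * 2 = algebraMap F A c := by
      rw [show (2 : A) = algebraMap F A 2 from (map_ofNat _ 2).symm, ← map_mul]
      congr 1
      exact div_mul_cancel₀ c h2
    have e2 : (algebraMap F A) (c / 2) ^ 2 = algebraMap F A (c ^ 2 / 4) := by
      rw [← map_pow]
      congr 1
      rw [div_pow, show (2:F)^2 = 4 from by norm_num]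
    have : y ^ 2 = x ^ 2 - (algebraMap F A (c/2) * 2) * x + algebraMap F A (c/2) ^ 2 := by
      rw [hy, Algebra.smul_def, mul_one]; ring
    rw [this, hx2, e1, e2, map_add]
    ring
  · rw [eq_top_iff, ← hspanx, Submodule.span_le]
    rintro w (rfl | rfl)
    · exact Submodule.subset_span (Set.mem_insert _ _)
    · refine Submodule.mem_span_pair.mpr ⟨c/2, 1, ?_⟩
      rw [hy, one_smul]
      abel

private lemma root_sq (h : F) :
    (AdjoinRoot.root (X ^ 2 - C h)) ^ 2 = algebraMap F (AdjoinRoot (X ^ 2 - C h)) h := by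
  have hms := AdjoinRoot.mk_self (f := X ^ 2 - C h)
  rw [map_sub, map_pow, AdjoinRoot.mk_X, AdjoinRoot.mk_C, sub_eq_zero] at hms
  rw [hms, AdjoinRoot.algebraMap_eq]

private lemma adjoinRoot_scale (h e : F) (he : e ≠ 0) :
    Nonempty (AdjoinRoot (X ^ 2 - C (h * e ^ 2)) ≃ₐ[F] AdjoinRoot (X ^ 2 - C h)) := by
  set f : Polynomial F := X ^ 2 - C (h * e ^ 2) with hf
  set g : Polynomial F := X ^ 2 - C h with hg
  have haev1 : aeval (e⁻¹ • AdjoinRoot.root f) g = 0 := by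
    rw [hg, map_sub, map_pow, aeval_X, aeval_C, _root_.smul_pow, root_sq, Algebra.smul_def, ← map_mul,
      sub_eq_zero]
    congr 1
    field_simp
  have haev2 : aeval (e • AdjoinRoot.root g) f = 0 := by
    rw [hf, map_sub, map_pow, aeval_X, aeval_C, _root_.smul_pow, root_sq, Algebra.smul_def, ← map_mul,
      sub_eq_zero]
    congr 1
    ring
  refine ⟨AlgEquiv.ofAlgHom (AdjoinRoot.liftAlgHom f (Algebra.ofId F _) (e • AdjoinRoot.root g) (by rw [← haev2]; rfl))
    (AdjoinRoot.liftAlgHom g (Algebra.ofId F _) (e⁻¹ • AdjoinRoot.root f) (by rw [← haev1]; rfl)) ?_ ?_⟩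
  · apply AdjoinRoot.algHom_ext
    rw [AlgHom.comp_apply, AdjoinRoot.liftAlgHom_root, map_smul, AdjoinRoot.liftAlgHom_root,
      AlgHom.id_apply, smul_smul, inv_mul_cancel₀ he, one_smul]
  · apply AdjoinRoot.algHom_ext
    rw [AlgHom.comp_apply, AdjoinRoot.liftAlgHom_root, map_smul, AdjoinRoot.liftAlgHom_root,
      AlgHom.id_apply, smul_smul, mul_inv_cancel₀ he, one_smul]

private lemma prod_equiv (h2 : (2:F) ≠ 0) (e : F) (he : e ≠ 0) :
    Nonempty ((F × F) ≃ₐ[F] AdjoinRoot (X ^ 2 - C (e ^ 2))) := by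
  have hdim : Module.finrank F (F × F) = 2 := by
    rw [Module.finrank_prod, Module.finrank_self]
  apply equiv_adjoinRoot hdim (e ^ 2) ((e, -e))
  · have : ((e, -e) : F × F) ^ 2 = (e ^ 2, (-e) ^ 2) := rfl
    rw [this, neg_pow, show (-1:F)^2 = 1 from by norm_num, one_mul]
    rfl
  · rw [eq_top_iff]
    rintro ⟨a, b⟩ -
    refine Submodule.mem_span_pair.mpr ⟨(a+b)/2, (a-b)/(2*e), ?_⟩
    have h2e : 2 * e ≠ 0 := mul_ne_zero h2 he
    rw [Prod.ext_iff]
    constructor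
    · show (a+b)/2 * 1 + (a-b)/(2*e) * e = a
      field_simp
      ring
    · show (a+b)/2 * 1 + (a-b)/(2*e) * (-e) = b
      field_simp
      ring

end Aux

set_option maxHeartbeats 1000000 in
/-- Any commutative `K`-algebra of dimension 2 over `K` is isomorphic (as a
`K`-algebra) to `K[X]/(X²)`, to `K × K`, or to `K[X]/(X² - ℏ)`. -/
theorem statement0 (A : Type) [CommRing A] [Algebra K A]
    (hdim : Module.finrank K A = 2) :
    Nonempty (A ≃ₐ[K] AdjoinRoot (Polynomial.X ^ 2 : Polynomial K)) ∨
    Nonempty (A ≃ₐ[K] (K × K)) ∨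
    Nonempty (A ≃ₐ[K] AdjoinRoot (Polynomial.X ^ 2 - Polynomial.C hbar)) := by
  have h2 : (2 : K) ≠ 0 := by
    intro h
    have hinj : Function.Injective (algebraMap ℂ K) := RingHom.injective _
    have : ((2 : ℂ)) = 0 := by
      apply hinj
      rw [map_ofNat, map_zero, h]
    norm_num at this
  obtain ⟨d, y, hy, hspan⟩ := exists_sq_scalar h2 hdim
  rcases eq_or_ne d 0 with rfl | hd
  · left
    exact equiv_adjoinRoot_zero hdim y hy hspan
  · rcases sq_or_hbar_mul_sq d hd with ⟨e, rfl⟩ | ⟨e, rfl⟩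
    · right; left
      have he : e ≠ 0 := by rintro rfl; simp at hd
      obtain ⟨i⟩ := equiv_adjoinRoot hdim (e ^ 2) y hy hspan
      obtain ⟨j⟩ := prod_equiv h2 e he
      exact ⟨i.trans j.symm⟩
    · right; right
      have he : e ≠ 0 := by rintro rfl; simp at hd
      obtain ⟨i⟩ := equiv_adjoinRoot hdim (hbar * e ^ 2) y hy hspan
      obtain ⟨j⟩ := adjoinRoot_scale hbar e he
      exact ⟨i.trans j⟩
end
end

section
/- Let m = 2n be even and let X ∈ Mₘ(K̄) satisfy Xᵀ·S·X = S (so X ∈ O(m, K̄)). Assume that for every σ ∈ Gal(K̄/K) the matrix X⁻¹·σ(X) is diagonal. Then there exist Q ∈ Mₘ(K̄) with all entries in the image of K and with Qᵀ·S·Q = S, and a diagonal matrix D ∈ Mₘ(K̄) with Dᵀ·S·D = S, such that X = Q·D. (Triviality of the Belavin–Drinfeld cohomology H¹_BD(r_DJ) for o(2n).) -/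
/-!
Write `σ(X) = X * diagonal c_σ`. Since `σ(X)` is again orthogonal, `c_σ j * c_σ j.rev = 1`. Fix a
nonzero entry `a j` in each column `j` of `X`. Then the ratios `X i j / a j` and the products
`a j * a j.rev` are Galois-invariant, so they lie in `K`. Because `j ↦ j.rev` has no fixed point on
`Fin (2n)`, one can divide one index of each pair `{j, j.rev}` by `a j * a j.rev` and get `d` with
`d j * d j.rev = 1` and `a j / d j ∈ K`. Then `Q = X * diagonal d⁻¹` and `D = diagonal d` work.
-/

open Matrix

noncomputable section

/-- A fixed algebraic closure of `K`. -/
abbrev Kbar : Type := AlgebraicClosure K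

/-- The matrix `S` with 1's on the antidiagonal and 0 elsewhere
(`S_{i,k} = 1` iff `i + k = m + 1` in 1-based indexing). -/
def Smat (F : Type*) [Field F] (m : ℕ) : Matrix (Fin m) (Fin m) F :=
  Matrix.of fun i k => if (i : ℕ) + (k : ℕ) + 1 = m then 1 else 0

-- makes `K` perfect, so that `Kbar` is a Galois extension of `K`
instance : CharZero K := charZero_of_injective_algebraMap (algebraMap ℂ K).injective

lemma Fin.rev_ne_self_of_even {m : ℕ} (hm : Even m) (j : Fin m) : j.rev ≠ j := by
  obtain ⟨k, rfl⟩ := hm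
  intro h
  have := congrArg Fin.val h
  rw [Fin.val_rev] at this
  omega

section Antidiagonal

variable {F : Type*} [Field F] {m : ℕ}

lemma Smat_apply (i k : Fin m) : Smat F m i k = if k = i.rev then 1 else 0 := by
  have : (i : ℕ) + k + 1 = m ↔ k = i.rev := by
    rw [Fin.ext_iff, Fin.val_rev]; omega
  simp only [Smat, of_apply, this]

lemma Smat_mul_Smat : Smat F m * Smat F m = 1 := by
  ext i k
  simp only [mul_apply, Smat_apply, ite_mul, one_mul, zero_mul, Finset.sum_ite_eq',
    Finset.mem_univ, if_true, Fin.rev_rev, one_apply, eq_comm]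

lemma map_Smat {G R : Type*} [Field G] [FunLike R F G] [RingHomClass R F G] (f : R) :
    (Smat F m).map f = Smat G m := by
  ext i k
  simp [Smat_apply, apply_ite f]

lemma isUnit_det_of_transpose_mul_Smat_mul_eq {X : Matrix (Fin m) (Fin m) F}
    (hX : Xᵀ * Smat F m * X = Smat F m) : IsUnit X.det :=
  isUnit_det_of_left_inverse (B := Smat F m * Xᵀ * Smat F m) <| by
    rw [Matrix.mul_assoc, Matrix.mul_assoc, ← Matrix.mul_assoc _ _ X, hX, Smat_mul_Smat]

lemma mul_transpose_mul_Smat_mul_mul (X D : Matrix (Fin m) (Fin m) F) :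
    (X * D)ᵀ * Smat F m * (X * D) = Dᵀ * (Xᵀ * Smat F m * X) * D := by
  simp only [transpose_mul, Matrix.mul_assoc]

lemma diagonal_transpose_mul_Smat_mul_diagonal_eq_iff (d : Fin m → F) :
    (diagonal d)ᵀ * Smat F m * diagonal d = Smat F m ↔ ∀ j, d j * d j.rev = 1 := by
  simp only [diagonal_transpose, diagonal_mul, mul_diagonal, ← Matrix.ext_iff, Smat_apply]
  constructor
  · intro h j
    simpa using h j j.rev
  · intro h i k
    split_ifs with hk
    · simp [hk, h]
    · simp

end Antidiagonal

lemma exists_mul_rev_eq_one_of_ne_zero {L : Type*} [Field L] {m : ℕ}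
    (hrev : ∀ j : Fin m, j.rev ≠ j) (a : Fin m → L) (ha : ∀ j, a j ≠ 0) :
    ∃ d : Fin m → L, ∀ j, d j * d j.rev = 1 ∧ (a j / d j = 1 ∨ a j / d j = a j * a j.rev) := by
  refine ⟨fun j => if j < j.rev then a j / (a j * a j.rev) else a j, fun j => ?_⟩
  have hj := ha j
  have hjr := ha j.rev
  rcases lt_or_gt_of_ne (hrev j).symm with hlt | hgt
  · have : ¬ j.rev < j.rev.rev := by rw [Fin.rev_rev]; exact hlt.not_gt
    dsimp only
    rw [if_pos hlt, if_neg this]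
    constructor
    · field_simp
    · right; field_simp
  · have : j.rev < j.rev.rev := by rwa [Fin.rev_rev]
    dsimp only
    rw [if_neg hgt.not_gt, if_pos this, Fin.rev_rev]
    constructor
    · field_simp
    · left; exact div_self hj

section GaloisDescent

variable {F L : Type*} [Field F] [Field L] [Algebra F L] {m : ℕ}

lemma exists_apply_eq_mul_of_isDiag_inv_mul_map {X : Matrix (Fin m) (Fin m) L}
    (hX : Xᵀ * Smat L m * X = Smat L m) {R : Type*} [FunLike R L L] [RingHomClass R L L] (f : R)
    (hdiag : (X⁻¹ * X.map f).IsDiag) :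
    ∃ c : Fin m → L, (∀ i j, f (X i j) = X i j * c j) ∧ ∀ j, c j * c j.rev = 1 := by
  obtain ⟨c, hmap⟩ : ∃ c, X.map f = X * diagonal c :=
    ⟨_, by rw [hdiag.diagonal_diag, ← Matrix.mul_assoc,
      mul_nonsing_inv X (isUnit_det_of_transpose_mul_Smat_mul_eq hX), Matrix.one_mul]⟩
  refine ⟨c, fun i j => by simpa [mul_diagonal] using congrFun (congrFun hmap i) j, ?_⟩
  rw [← diagonal_transpose_mul_Smat_mul_diagonal_eq_iff]
  calc (diagonal c)ᵀ * Smat L m * diagonal c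
      = (X.map f)ᵀ * Smat L m * X.map f := by rw [hmap, mul_transpose_mul_Smat_mul_mul, hX]
    _ = (Xᵀ * Smat L m * X).map f := by rw [Matrix.map_mul, Matrix.map_mul, transpose_map, map_Smat]
    _ = Smat L m := by rw [hX, map_Smat]

lemma exists_mem_range_mul_diagonal_of_isDiag_inv_mul_map [IsGalois F L] (hm : Even m)
    (X : Matrix (Fin m) (Fin m) L) (hX : Xᵀ * Smat L m * X = Smat L m)
    (h : ∀ σ : L ≃ₐ[F] L, (X⁻¹ * X.map σ).IsDiag) :
    ∃ (Q : Matrix (Fin m) (Fin m) L) (d : Fin m → L),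
      (∀ i j, Q i j ∈ (algebraMap F L).range) ∧ Qᵀ * Smat L m * Q = Smat L m ∧
      (∀ j, d j * d j.rev = 1) ∧ X = Q * diagonal d := by
  have fixed_mem_bot : ∀ x : L, (∀ σ : L ≃ₐ[F] L, σ x = x) → x ∈ (⊥ : IntermediateField F L) :=
    fun x hx => (InfiniteGalois.mem_bot_iff_fixed x).mpr hx
  choose c hXc hc using fun σ : L ≃ₐ[F] L => exists_apply_eq_mul_of_isDiag_inv_mul_map hX σ (h σ)
  have hc0 : ∀ σ j, c σ j ≠ 0 := fun σ j => left_ne_zero_of_mul_eq_one (hc σ j)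
  have hcol : ∀ j, ∃ i, X i j ≠ 0 := by
    intro j
    by_contra! h0
    exact (isUnit_det_of_transpose_mul_Smat_mul_eq hX).ne_zero (det_eq_zero_of_column_eq_zero j h0)
  choose r hr using hcol
  set a : Fin m → L := fun j => X (r j) j
  obtain ⟨d, hd⟩ := exists_mul_rev_eq_one_of_ne_zero (Fin.rev_ne_self_of_even hm) a hr
  have hd0 : ∀ j, d j ≠ 0 := fun j => left_ne_zero_of_mul_eq_one (hd j).1
  have hcolumn : ∀ i j, X i j / a j ∈ (⊥ : IntermediateField F L) := fun i j =>
    fixed_mem_bot _ fun σ => by rw [map_div₀, hXc, hXc σ (r j), mul_div_mul_right _ _ (hc0 σ j)]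
  have hnorm : ∀ j, a j * a j.rev ∈ (⊥ : IntermediateField F L) := fun j =>
    fixed_mem_bot _ fun σ => by
      rw [map_mul, hXc σ (r j), hXc σ (r j.rev), mul_mul_mul_comm, hc, mul_one]
  have hrescale : ∀ j, a j / d j ∈ (⊥ : IntermediateField F L) := fun j => by
    rcases (hd j).2 with h1 | he
    · rw [h1]; exact one_mem _
    · rw [he]; exact hnorm j
  refine ⟨X * diagonal d⁻¹, d, fun i j => ?_, ?_, fun j => (hd j).1, ?_⟩
  · rw [RingHom.mem_range, ← Set.mem_range, ← IntermediateField.mem_bot, mul_diagonal,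
      Pi.inv_apply, ← div_eq_mul_inv, ← div_mul_div_cancel₀ (hr j)]
    exact mul_mem (hcolumn i j) (hrescale j)
  · rw [mul_transpose_mul_Smat_mul_mul, hX, diagonal_transpose_mul_Smat_mul_diagonal_eq_iff]
    intro j
    rw [Pi.inv_apply, Pi.inv_apply, ← mul_inv, (hd j).1, inv_one]
  · rw [Matrix.mul_assoc, diagonal_mul_diagonal]
    simp [hd0]

end GaloisDescent

/-- Triviality of the Belavin–Drinfeld cohomology `H¹_BD(r_DJ)` for `o(2n)`:
if `X ∈ O(2n, K̄)` and `X⁻¹·σ(X)` is diagonal for all `σ ∈ Gal(K̄/K)`, then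
`X = Q·D` with `Q ∈ O(2n, K)` and `D` diagonal orthogonal. -/
theorem statement7 (n : ℕ)
    (X : Matrix (Fin (2 * n)) (Fin (2 * n)) Kbar)
    (hX : Xᵀ * Smat Kbar (2 * n) * X = Smat Kbar (2 * n))
    (h : ∀ σ : Kbar ≃ₐ[K] Kbar, (X⁻¹ * X.map σ).IsDiag) :
    ∃ Q D : Matrix (Fin (2 * n)) (Fin (2 * n)) Kbar,
      (∀ i j, Q i j ∈ (algebraMap K Kbar).range) ∧
      Qᵀ * Smat Kbar (2 * n) * Q = Smat Kbar (2 * n) ∧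
      D.IsDiag ∧ Dᵀ * Smat Kbar (2 * n) * D = Smat Kbar (2 * n) ∧
      X = Q * D := by
  obtain ⟨Q, d, hQ, hQS, hd, rfl⟩ :=
    exists_mem_range_mul_diagonal_of_isDiag_inv_mul_map (even_two_mul n) X hX h
  exact ⟨Q, diagonal d, hQ, hQS, isDiag_diagonal d,
    (diagonal_transpose_mul_Smat_mul_diagonal_eq_iff d).mpr hd, rfl⟩
end
end

section
/- Fix j ∈ K̄ with j² = ℏ, E = K(j) ⊆ K̄, and σ₂ ∈ Gal(K̄/K) with σ₂(j) = −j. Let X ∈ GL(n, K̄) be such that for every σ ∈ Gal(K̄/E) the matrix X⁻¹·σ(X) is diagonal. Then there exist an invertible matrix P ∈ GL(n, K̄) all of whose entries lie in E, and an invertible diagonal matrix D ∈ GL(n, K̄), such that X = P·D. -/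
open Matrix

noncomputable section

/-- `E = K(j)`, the subfield of `K̄` generated over `K` by `j`. -/
abbrev Efield (j : Kbar) : IntermediateField K Kbar :=
  IntermediateField.adjoin K {j}

/-!
Write `X⁻¹ σ(X) = diag(c_σ)`, i.e. `σ` scales the `i`-th column of `X` by `c_σ i`.
Dividing each column of `X` by one of its nonzero entries gives a matrix `P` whose
entries are fixed by every `σ ∈ Gal(K̄/E)`; since `K̄/K` is Galois (characteristic zero),
they lie in `E`, and `X = P · diag(d)` where `d` records the chosen entries.
-/

instance LaurentSeries.instCharZero {R : Type*} [Field R] [CharZero R] :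
    CharZero (LaurentSeries R) :=
  charZero_of_injective_algebraMap (algebraMap R (LaurentSeries R)).injective

theorem IntermediateField.mem_of_forall_algEquiv_apply_eq {F L : Type*} [Field F] [Field L]
    [Algebra F L] [IsGalois F L] (E : IntermediateField F L) {x : L}
    (hx : ∀ σ : L ≃ₐ[F] L, (∀ y ∈ E, σ y = y) → σ x = x) : x ∈ E := by
  rw [← InfiniteGalois.fixedField_fixingSubgroup E, mem_fixedField_iff]
  exact fun σ hσ => hx σ ((mem_fixingSubgroup_iff E σ).mp hσ)

namespace Matrix

variable {n L : Type*} [Fintype n] [DecidableEq n]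

theorem exists_ne_zero_of_isUnit [CommRing L] [Nontrivial L] {X : Matrix n n L} (hX : IsUnit X)
    (i : n) : ∃ k, X k i ≠ 0 := by
  by_contra! hcol
  exact ((isUnit_iff_isUnit_det X).mp hX).ne_zero (det_eq_zero_of_column_eq_zero i hcol)

theorem eq_mul_diagonal_diag_of_isDiag [CommRing L] {X Y : Matrix n n L} (hX : IsUnit X)
    (hd : (X⁻¹ * Y).IsDiag) : Y = X * diagonal (X⁻¹ * Y).diag := by
  rw [hd.diagonal_diag, mul_nonsing_inv_cancel_left _ _ ((isUnit_iff_isUnit_det X).mp hX)]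

theorem map_div_eq_of_isDiag [Field L] {F : Type*} [FunLike F L L] [RingHomClass F L L]
    (σ : F) {X : Matrix n n L} (hX : IsUnit X) (hσ : (X⁻¹ * X.map σ).IsDiag) (a b i : n)
    (hb : X b i ≠ 0) : σ (X a i / X b i) = X a i / X b i := by
  have hcol (r : n) : σ (X r i) = X r i * (X⁻¹ * X.map σ) i i := by
    simpa only [map_apply, mul_diagonal, diag_apply] using
      congrFun₂ (eq_mul_diagonal_diag_of_isDiag hX hσ) r i
  have hc : (X⁻¹ * X.map σ) i i ≠ 0 := by
    intro h0
    have : σ (X b i) = 0 := by rw [hcol, h0, mul_zero]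
    exact hb ((map_eq_zero_iff σ (RingHom.injective (σ : L →+* L))).mp this)
  rw [map_div₀, hcol, hcol, mul_div_mul_right _ _ hc]

theorem eq_of_div_mul_diagonal [Field L] (X : Matrix n n L) {d : n → L} (hd : ∀ i, d i ≠ 0) :
    X = of (fun a i => X a i / d i) * diagonal d := by
  ext a i
  simp only [mul_diagonal, of_apply, div_mul_cancel₀ _ (hd i)]

end Matrix

theorem statement13_general (n : ℕ) (j : Kbar)
    (X : Matrix (Fin n) (Fin n) Kbar) (hX : IsUnit X)
    (h : ∀ σ : Kbar ≃ₐ[K] Kbar, (∀ x ∈ Efield j, σ x = x) →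
      (X⁻¹ * X.map σ).IsDiag) :
    ∃ P D : Matrix (Fin n) (Fin n) Kbar,
      IsUnit P ∧ (∀ a b, P a b ∈ Efield j) ∧
      IsUnit D ∧ D.IsDiag ∧ X = P * D := by
  choose k hk using exists_ne_zero_of_isUnit hX
  set d : Fin n → Kbar := fun i => X (k i) i
  have hXPD := X.eq_of_div_mul_diagonal hk
  have hD : IsUnit (diagonal d) := isUnit_diagonal.mpr (Pi.isUnit_iff.mpr fun i => (hk i).isUnit)
  refine ⟨_, _, ?_, fun a i => ?_, hD, isDiag_diagonal d, hXPD⟩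
  · rw [hXPD] at hX
    exact isUnit_of_mul_isUnit_left hX
  · exact (Efield j).mem_of_forall_algEquiv_apply_eq fun σ hσ =>
      map_div_eq_of_isDiag σ hX (h σ hσ) a (k i) i (hk i)

/-- If `X ∈ GL(n, K̄)` satisfies that `X⁻¹·σ(X)` is diagonal for every
`σ ∈ Gal(K̄/E)` (where `E = K(j)`, `j² = ℏ`), then `X = P·D` with
`P ∈ GL(n, K̄)` having all entries in `E` and `D` an invertible diagonal
matrix. -/
theorem statement13 (n : ℕ) (j : Kbar)
    (hj : j ^ 2 = algebraMap K Kbar hbar)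
    (σ₂ : Kbar ≃ₐ[K] Kbar) (hσ : σ₂ j = -j)
    (X : Matrix (Fin n) (Fin n) Kbar) (hX : IsUnit X)
    (h : ∀ σ : Kbar ≃ₐ[K] Kbar, (∀ x ∈ Efield j, σ x = x) →
      (X⁻¹ * X.map σ).IsDiag) :
    ∃ P D : Matrix (Fin n) (Fin n) Kbar,
      IsUnit P ∧ (∀ a b, P a b ∈ Efield j) ∧
      IsUnit D ∧ D.IsDiag ∧ X = P * D :=
  statement13_general n j X hX h
end
end

section
/- Let E be a field of characteristic 0 containing elements ℏ and j with j² = ℏ and j ≠ 0. In M₂(E) set e = E₁₂, f = E₂₁, h = E₁₁ − E₂₂, and let X₀ ∈ GL(2, E) be the matrix with rows (1, 1) and (j, −j). Then, in M₂(E) ⊗_E M₂(E), j·(Ad_{X₀} ⊗ Ad_{X₀})(e ⊗ f + (1/4)·h ⊗ h) = (j/2)·(e ⊗ f + f ⊗ e + (1/2)·h ⊗ h) + (1/4)·(h ⊗ e − e ⊗ h) + (ℏ/4)·(f ⊗ h − h ⊗ f). -/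
open scoped TensorProduct

noncomputable section

/-- Conjugation `a ↦ X a X⁻¹` as a linear endomorphism of `Mₙ(F)`. -/
def conjLin (F : Type*) [Field F] {n : ℕ} (X : Matrix (Fin n) (Fin n) F) :
    Matrix (Fin n) (Fin n) F →ₗ[F] Matrix (Fin n) (Fin n) F :=
  (LinearMap.mulLeft F X).comp (LinearMap.mulRight F X⁻¹)

/-- The operator `Ad_X ⊗ Ad_X : a ⊗ b ↦ (X a X⁻¹) ⊗ (X b X⁻¹)` on
`Mₙ(F) ⊗_F Mₙ(F)`. -/
def AdT (F : Type*) [Field F] {n : ℕ} (X : Matrix (Fin n) (Fin n) F) :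
    (Matrix (Fin n) (Fin n) F ⊗[F] Matrix (Fin n) (Fin n) F) →ₗ[F]
      (Matrix (Fin n) (Fin n) F ⊗[F] Matrix (Fin n) (Fin n) F) :=
  TensorProduct.map (conjLin F X) (conjLin F X)

/-- `e = E₁₂` in `M₂(E)`. -/
def eM (E : Type*) [Field E] : Matrix (Fin 2) (Fin 2) E :=
  Matrix.single 0 1 1

/-- `f = E₂₁` in `M₂(E)`. -/
def fM (E : Type*) [Field E] : Matrix (Fin 2) (Fin 2) E :=
  Matrix.single 1 0 1

/-- `h = E₁₁ − E₂₂` in `M₂(E)`. -/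
def hM (E : Type*) [Field E] : Matrix (Fin 2) (Fin 2) E :=
  Matrix.single 0 0 1 - Matrix.single 1 1 1

/-! The conjugation by `X₀ = [[1, 1], [j, −j]]` maps `e, f, h` to explicit combinations of
`e, f, h`; expanding bilinearly, the identity reduces to equalities of coefficients, which hold
because `j² = ℏ`. -/

section Conjugation

variable {F : Type*} [Field F] {n : ℕ}

lemma conjLin_apply_of_mul_eq_one {X Y : Matrix (Fin n) (Fin n) F} (hXY : X * Y = 1)
    (a : Matrix (Fin n) (Fin n) F) : conjLin F X a = X * a * Y := by
  rw [conjLin, LinearMap.comp_apply, LinearMap.mulRight_apply, LinearMap.mulLeft_apply,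
    Matrix.inv_eq_right_inv hXY, Matrix.mul_assoc]

lemma AdT_tmul (X a b : Matrix (Fin n) (Fin n) F) :
    AdT F X (a ⊗ₜ b) = conjLin F X a ⊗ₜ conjLin F X b :=
  rfl

end Conjugation

section X₀

variable {E : Type*} [Field E]

lemma eM_eq : eM E = !![0, 1; 0, 0] := by
  ext i k; fin_cases i <;> fin_cases k <;> rfl

lemma fM_eq : fM E = !![0, 0; 1, 0] := by
  ext i k; fin_cases i <;> fin_cases k <;> rfl

lemma hM_eq : hM E = !![1, 0; 0, -1] := by
  ext i k; fin_cases i <;> fin_cases k <;> simp [hM]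

variable [NeZero (2 : E)] {j : E}

lemma X₀_mul_inv_eq_one (hj : j ≠ 0) :
    !![1, 1; j, -j] * !![2⁻¹, (2 * j)⁻¹; 2⁻¹, -(2 * j)⁻¹] = (1 : Matrix (Fin 2) (Fin 2) E) := by
  ext i k
  fin_cases i <;> fin_cases k <;> simp <;> field_simp <;> ring

lemma conjLin_X₀_eM (hj : j ≠ 0) :
    conjLin E !![1, 1; j, -j] (eM E) = (-(2 * j)⁻¹) • eM E + (j / 2) • fM E + (2⁻¹ : E) • hM E := by
  rw [conjLin_apply_of_mul_eq_one (X₀_mul_inv_eq_one hj), eM_eq, fM_eq, hM_eq]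
  ext i k
  fin_cases i <;> fin_cases k <;> simp <;> field_simp

lemma conjLin_X₀_fM (hj : j ≠ 0) :
    conjLin E !![1, 1; j, -j] (fM E) = (2 * j)⁻¹ • eM E - (j / 2) • fM E + (2⁻¹ : E) • hM E := by
  rw [conjLin_apply_of_mul_eq_one (X₀_mul_inv_eq_one hj), eM_eq, fM_eq, hM_eq]
  ext i k
  fin_cases i <;> fin_cases k <;> simp <;> field_simp

lemma conjLin_X₀_hM (hj : j ≠ 0) :
    conjLin E !![1, 1; j, -j] (hM E) = j⁻¹ • eM E + j • fM E := by
  rw [conjLin_apply_of_mul_eq_one (X₀_mul_inv_eq_one hj), eM_eq, fM_eq, hM_eq]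
  ext i k
  fin_cases i <;> fin_cases k <;> simp <;> field_simp <;> ring

end X₀

/-- With `X₀ = [[1, 1], [j, −j]]` and `j² = ℏ`, one has
`j·(Ad_{X₀} ⊗ Ad_{X₀})(e ⊗ f + (1/4)·h ⊗ h)
  = (j/2)·Ω + (1/4)·(h ⊗ e − e ⊗ h) + (ℏ/4)·(f ⊗ h − h ⊗ f)`,
where `Ω = e ⊗ f + f ⊗ e + (1/2)·h ⊗ h` is the Casimir element of `sl(2)`. -/
theorem statement16 (E : Type*) [Field E] [CharZero E] (hbar j : E)
    (hj : j ^ 2 = hbar) (hj0 : j ≠ 0) :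
    j • AdT E (!![1, 1; j, -j])
        (eM E ⊗ₜ[E] fM E + (4⁻¹ : E) • (hM E ⊗ₜ[E] hM E))
      = (j / 2) • (eM E ⊗ₜ[E] fM E + fM E ⊗ₜ[E] eM E
            + (2⁻¹ : E) • (hM E ⊗ₜ[E] hM E))
        + (4⁻¹ : E) • (hM E ⊗ₜ[E] eM E - eM E ⊗ₜ[E] hM E)
        + (hbar / 4) • (fM E ⊗ₜ[E] hM E - hM E ⊗ₜ[E] fM E) := by
  subst hj
  rw [map_add, map_smul, AdT_tmul, AdT_tmul, conjLin_X₀_eM hj0, conjLin_X₀_fM hj0,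
    conjLin_X₀_hM hj0]
  simp only [TensorProduct.add_tmul, TensorProduct.tmul_add, TensorProduct.tmul_sub,
    ← TensorProduct.smul_tmul', TensorProduct.tmul_smul, smul_add, smul_sub, smul_smul]
  match_scalars <;> field_simp <;> ring
end
end
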